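/- arXiv:1807.02972 — 8 statements merged into one kernel-verified Lean document; each statement's English description precedes it below -/
import Mathlib

section
/- For any single prime p, there is no triple (a,b,c) of distinct positive integers such that ab+1, ac+1, and bc+1 are all powers of p. -/
lemma Nat.pow_dvd_pow_of_pow_le {p i j : ℕ} (hp : 1 < p) (h : p ^ i ≤ p ^ j) : p ^ i ∣ p ^ j :=
  (Nat.pow_dvd_pow_iff_le_right hp).2 ((Nat.pow_le_pow_iff_right hp).1 h)

lemma Nat.mul_add_one_dvd_sub_of_dvd {a b c : ℕ} (h : a * c + 1 ∣ b * c + 1) :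
    a * c + 1 ∣ b - a := by
  have hsub : a * c + 1 ∣ (b - a) * c := by
    have := Nat.dvd_sub h dvd_rfl
    rwa [Nat.add_sub_add_right, ← Nat.sub_mul] at this
  have hcop : (a * c + 1).Coprime c := by simp [Nat.coprime_mul_right_add_left]
  exact hcop.dvd_of_dvd_mul_right hsub

/-- The smaller power `a * c + 1` divides the larger, hence `(b - a) * c`, hence `b - a`;
but `a * c + 1 > c ≥ b`. -/
lemma Nat.mul_add_one_eq_pow_absurd {p : ℕ} (hp : 1 < p) {a b c i j : ℕ} (ha : 0 < a)
    (hab : a < b) (hbc : b ≤ c) (hi : a * c + 1 = p ^ i) (hj : b * c + 1 = p ^ j) : False := by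
  have hdvd : a * c + 1 ∣ b * c + 1 := by
    have hpow : p ^ i ≤ p ^ j := by rw [← hi, ← hj]; gcongr
    rw [hi, hj]
    exact Nat.pow_dvd_pow_of_pow_le hp hpow
  have hle : a * c + 1 ≤ b - a := Nat.le_of_dvd (by omega) (Nat.mul_add_one_dvd_sub_of_dvd hdvd)
  have : c ≤ a * c := Nat.le_mul_of_pos_left c ha
  omega

theorem stmt_1 (p : ℕ) (hp : p.Prime) (a b c : ℕ)
    (ha : 0 < a) (hb : 0 < b) (hc : 0 < c)
    (hab : a ≠ b) (hac : a ≠ c) (hbc : b ≠ c)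
    (h1 : ∃ k : ℕ, a * b + 1 = p ^ k)
    (h2 : ∃ k : ℕ, a * c + 1 = p ^ k)
    (h3 : ∃ k : ℕ, b * c + 1 = p ^ k) : False := by
  obtain ⟨i, hab_pow⟩ := h1
  obtain ⟨j, hac_pow⟩ := h2
  obtain ⟨k, hbc_pow⟩ := h3
  have hba_pow : b * a + 1 = p ^ i := by rwa [mul_comm]
  have hca_pow : c * a + 1 = p ^ j := by rwa [mul_comm]
  have hcb_pow : c * b + 1 = p ^ k := by rwa [mul_comm]
  have no_pair := @Nat.mul_add_one_eq_pow_absurd p hp.one_lt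
  rcases lt_or_gt_of_ne hab with hab | hab <;> rcases lt_or_gt_of_ne hac with hac | hac <;>
    rcases lt_or_gt_of_ne hbc with hbc | hbc
  · exact no_pair ha hab hbc.le hac_pow hbc_pow
  · exact no_pair ha hac hbc.le hab_pow hcb_pow
  · omega
  · exact no_pair hc hac hab.le hcb_pow hab_pow
  · exact no_pair hb hab hac.le hbc_pow hac_pow
  · omega
  · exact no_pair hb hbc hac.le hba_pow hca_pow
  · exact no_pair hc hbc hab.le hca_pow hba_pow
end

section
/- If (a,b,c,d) are positive integers with a < b < c < d and s1 = ab+1, s2 = ac+1, s4 = bc+1, then gcd(s4,s2) * gcd(s4,s1) < s4. -/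
/-! Any common divisor of `s4 = bc + 1` and `s2 = ac + 1` divides `b s2 - a s4 = b - a`, and likewise
`gcd(s4, s1)` divides `c s1 - a s4 = c - a`. Hence the product of the two gcds is at most
`(b - a)(c - a) ≤ bc < s4`. -/

theorem Nat.gcd_mul_add_one_mul_add_one_dvd_sub (m k n : ℕ) :
    Nat.gcd (m * n + 1) (k * n + 1) ∣ m - k := by
  have key : m * (k * n + 1) - k * (m * n + 1) = m - k := by
    rw [Nat.mul_add, Nat.mul_add, mul_one, mul_one, mul_left_comm]
    omega
  rw [← key]
  exact Nat.dvd_sub (dvd_mul_of_dvd_right (Nat.gcd_dvd_right _ _) m)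
    (dvd_mul_of_dvd_right (Nat.gcd_dvd_left _ _) k)

theorem Nat.gcd_mul_add_one_mul_add_one_le_sub {m k : ℕ} (n : ℕ) (h : k < m) :
    Nat.gcd (m * n + 1) (k * n + 1) ≤ m - k :=
  Nat.le_of_dvd (Nat.sub_pos_of_lt h) (Nat.gcd_mul_add_one_mul_add_one_dvd_sub m k n)

theorem stmt_3_general (a b c : ℕ) (hab : a < b) (hbc : b < c)
    (s1 s2 s4 : ℕ) (hs1 : s1 = a * b + 1) (hs2 : s2 = a * c + 1) (hs4 : s4 = b * c + 1) :
    Nat.gcd s4 s2 * Nat.gcd s4 s1 < s4 := by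
  subst hs1 hs2 hs4
  have h42 : Nat.gcd (b * c + 1) (a * c + 1) ≤ b - a :=
    Nat.gcd_mul_add_one_mul_add_one_le_sub c hab
  have h41 : Nat.gcd (b * c + 1) (a * b + 1) ≤ c - a := by
    rw [mul_comm b c]
    exact Nat.gcd_mul_add_one_mul_add_one_le_sub b (hab.trans hbc)
  calc Nat.gcd (b * c + 1) (a * c + 1) * Nat.gcd (b * c + 1) (a * b + 1)
      ≤ (b - a) * (c - a) := Nat.mul_le_mul h42 h41
    _ ≤ b * c := Nat.mul_le_mul (Nat.sub_le b a) (Nat.sub_le c a)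
    _ < b * c + 1 := Nat.lt_succ_self _

theorem stmt_3 (a b c d : ℕ) (ha : 0 < a) (hab : a < b) (hbc : b < c) (hcd : c < d)
    (s1 s2 s4 : ℕ) (hs1 : s1 = a * b + 1) (hs2 : s2 = a * c + 1) (hs4 : s4 = b * c + 1) :
    Nat.gcd s4 s2 * Nat.gcd s4 s1 < s4 :=
  stmt_3_general a b c hab hbc s1 s2 s4 hs1 hs2 hs4
end

section
/- If (a,b,c,d) are positive integers with a < b < c < d and s3 = ad+1, s5 = bd+1, s6 = cd+1, then gcd(s6,s5) * gcd(s6,s4) < s6, where s4 = bc+1. -/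
/-!
Both gcds are bounded by differences: `gcd(cd+1, bd+1)` divides `c(bd+1) - b(cd+1) = c - b`
and `gcd(cd+1, bc+1)` divides `d(bc+1) - b(cd+1) = d - b`. Hence the product of the gcds is at
most `(c - b)(d - b) ≤ cd < cd + 1`.
-/

theorem Nat.gcd_mul_add_one_mul_add_one_dvd_sub_s4 (b c d : ℕ) :
    Nat.gcd (c * d + 1) (b * d + 1) ∣ c - b := by
  have h : c * (b * d + 1) - b * (c * d + 1) = c - b := by
    rw [show c * (b * d + 1) = b * c * d + c by ring,
      show b * (c * d + 1) = b * c * d + b by ring, Nat.add_sub_add_left]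
  rw [← h]
  exact Nat.dvd_sub ((Nat.gcd_dvd_right _ _).mul_left c) ((Nat.gcd_dvd_left _ _).mul_left b)

theorem Nat.gcd_mul_add_one_mul_add_one_le_sub_s4 {b c : ℕ} (hbc : b < c) (d : ℕ) :
    Nat.gcd (c * d + 1) (b * d + 1) ≤ c - b :=
  Nat.le_of_dvd (Nat.sub_pos_of_lt hbc) (Nat.gcd_mul_add_one_mul_add_one_dvd_sub_s4 b c d)

theorem stmt_4_general (b c d : ℕ) (hbc : b < c) (hcd : c < d)
    (s4 s5 s6 : ℕ) (hs4 : s4 = b * c + 1) (hs5 : s5 = b * d + 1) (hs6 : s6 = c * d + 1) :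
    Nat.gcd s6 s5 * Nat.gcd s6 s4 < s6 := by
  subst hs4 hs5 hs6
  have h5 : Nat.gcd (c * d + 1) (b * d + 1) ≤ c - b :=
    Nat.gcd_mul_add_one_mul_add_one_le_sub_s4 hbc d
  have h4 : Nat.gcd (c * d + 1) (b * c + 1) ≤ d - b := by
    simpa only [Nat.mul_comm c d] using
      Nat.gcd_mul_add_one_mul_add_one_le_sub_s4 (hbc.trans hcd) c
  calc Nat.gcd (c * d + 1) (b * d + 1) * Nat.gcd (c * d + 1) (b * c + 1)
      ≤ (c - b) * (d - b) := Nat.mul_le_mul h5 h4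
    _ ≤ c * d := Nat.mul_le_mul (Nat.sub_le c b) (Nat.sub_le d b)
    _ < c * d + 1 := Nat.lt_succ_self _

theorem stmt_4 (a b c d : ℕ) (ha : 0 < a) (hab : a < b) (hbc : b < c) (hcd : c < d)
    (s4 s5 s6 : ℕ) (hs4 : s4 = b * c + 1) (hs5 : s5 = b * d + 1) (hs6 : s6 = c * d + 1) :
    Nat.gcd s6 s5 * Nat.gcd s6 s4 < s6 :=
  stmt_4_general b c d hbc hcd s4 s5 s6 hs4 hs5 hs6
end

section
/- Let p be a prime with p ≡ 3 mod 4 and q a prime distinct from p. If a, b, c are positive integers such that ab+1 = p^{α1} q^{β1}, ac+1 = p^{α2} q^{β2}, bc+1 = p^{α4} q^{β4} with all three exponents α1, α2, α4 positive, then we reach a contradiction; i.e., at least one of α1, α2, α4 equals 0. -/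
/-! Since `p` divides `ab + 1`, `ac + 1` and `bc + 1`, modulo `p` we get
`(abc)² = (ab)(ac)(bc) = -1`, but `-1` is not a square modulo a prime `p ≡ 3 (mod 4)`. -/

theorem ZMod.natCast_mul_eq_neg_one_of_dvd {n x y : ℕ} (h : n ∣ x * y + 1) :
    (x : ZMod n) * y = -1 := by
  have h0 : ((x * y + 1 : ℕ) : ZMod n) = 0 := (ZMod.natCast_eq_zero_iff _ _).2 h
  push_cast at h0
  linear_combination h0

theorem isSquare_neg_one_of_mul_eq_neg_one {R : Type*} [CommRing R] {x y z : R}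
    (hxy : x * y = -1) (hxz : x * z = -1) (hyz : y * z = -1) : IsSquare (-1 : R) :=
  ⟨x * y * z, by linear_combination -(x * z * (y * z)) * hxy + y * z * hxz - hyz⟩

theorem stmt_5_general (p q : ℕ) (hp : p.Prime)
    (hp4 : p % 4 = 3) (a b c : ℕ)
    (α1 β1 α2 β2 α4 β4 : ℕ)
    (h1 : a * b + 1 = p ^ α1 * q ^ β1)
    (h2 : a * c + 1 = p ^ α2 * q ^ β2)
    (h4 : b * c + 1 = p ^ α4 * q ^ β4)
    (hα1 : 0 < α1) (hα2 : 0 < α2) (hα4 : 0 < α4) : False := by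
  have : Fact p.Prime := ⟨hp⟩
  have hdvd {α β : ℕ} (hα : 0 < α) : p ∣ p ^ α * q ^ β := (dvd_pow_self p hα.ne').mul_right _
  have hsq : IsSquare (-1 : ZMod p) := isSquare_neg_one_of_mul_eq_neg_one
    (ZMod.natCast_mul_eq_neg_one_of_dvd (h1 ▸ hdvd hα1))
    (ZMod.natCast_mul_eq_neg_one_of_dvd (h2 ▸ hdvd hα2))
    (ZMod.natCast_mul_eq_neg_one_of_dvd (h4 ▸ hdvd hα4))
  exact ZMod.exists_sq_eq_neg_one_iff.mp hsq hp4

theorem stmt_5 (p q : ℕ) (hp : p.Prime) (hq : q.Prime) (hpq : p ≠ q)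
    (hp4 : p % 4 = 3) (a b c : ℕ) (ha : 0 < a) (hb : 0 < b) (hc : 0 < c)
    (α1 β1 α2 β2 α4 β4 : ℕ)
    (h1 : a * b + 1 = p ^ α1 * q ^ β1)
    (h2 : a * c + 1 = p ^ α2 * q ^ β2)
    (h4 : b * c + 1 = p ^ α4 * q ^ β4)
    (hα1 : 0 < α1) (hα2 : 0 < α2) (hα4 : 0 < α4) : False :=
  stmt_5_general p q hp hp4 a b c α1 β1 α2 β2 α4 β4 h1 h2 h4 hα1 hα2 hα4
end

section
/- Let p ≡ 3 mod 4 be prime and q ≠ p a prime. If (a,b,c,d) is a {p,q}-Diophantine quadruple with a < b < c < d, and α_i denotes the exponent of p in s_i (where s1=ab+1, s2=ac+1, s3=ad+1, s4=bc+1, s5=bd+1, s6=cd+1), then α1=α6=0 or α2=α5=0 or α3=α4=0. -/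
/-!
Call a pair `{u, v}` *marked* when `p ∣ uv + 1`, i.e. `α ≠ 0`. If the conclusion fails, each of
the three perfect matchings `{ab, cd}`, `{ac, bd}`, `{ad, bc}` contains a marked pair, and three
pairs chosen one from each matching form either a triangle or a star.

A marked triangle `{x, y, z}` is impossible: modulo `p` we would get
`(xyz)² = (xy)(xz)(yz) = -1`, but `-1` is not a square modulo `p ≡ 3 (mod 4)`.

For a marked star at `v`, the triangle `x < y < z` on the other three elements has no marked pair
(it would close a marked triangle with two edges of the star), so `xz + 1` and `yz + 1` are both
powers of `q`. The smaller one then divides the larger one, hence divides their difference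
`(y - x) z`, hence `y - x`, which is too small.
-/

theorem Nat.not_mul_add_one_dvd_mul_add_one {x y z : ℕ} (hx : 0 < x) (hxy : x < y)
    (hyz : y ≤ z) : ¬ x * z + 1 ∣ y * z + 1 := by
  intro h
  have hdiff : x * z + 1 ∣ (y - x) * z := by
    have := Nat.dvd_sub h dvd_rfl
    rwa [show y * z + 1 - (x * z + 1) = (y - x) * z by rw [Nat.sub_mul]; omega] at this
  have hcop : Nat.Coprime (x * z + 1) z :=
    (Nat.coprime_mul_right_add_left 1 z x).2 (Nat.coprime_one_left z)
  have hle := Nat.le_of_dvd (by omega) (hcop.dvd_of_dvd_mul_right hdiff)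
  have := Nat.le_mul_of_pos_left z hx
  omega

theorem Nat.false_of_mul_add_one_eq_pow {q x y z j k : ℕ} (hx : 0 < x) (hxy : x < y)
    (hyz : y ≤ z) (hj : x * z + 1 = q ^ j) (hk : y * z + 1 = q ^ k) : False := by
  have hxz : 0 < x * z := Nat.mul_pos hx (by omega)
  have hj0 : j ≠ 0 := by
    rintro rfl
    rw [pow_zero] at hj
    omega
  have hq : 1 < q := (Nat.one_lt_pow_iff hj0).mp (by omega)
  have hle : q ^ j ≤ q ^ k := by
    rw [← hj, ← hk]
    exact Nat.succ_le_succ (Nat.mul_le_mul_right z hxy.le)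
  refine Nat.not_mul_add_one_dvd_mul_add_one hx hxy hyz ?_
  rw [hj, hk]
  exact pow_dvd_pow q ((Nat.pow_le_pow_iff_right hq).mp hle)

theorem Nat.Prime.not_dvd_mul_add_one_of_mod_four_eq_three {p x y z : ℕ} (hp : p.Prime)
    (hp4 : p % 4 = 3) (hxy : p ∣ x * y + 1) (hxz : p ∣ x * z + 1) : ¬ p ∣ y * z + 1 := by
  intro hyz
  have : Fact p.Prime := ⟨hp⟩
  have mul_eq_neg_one : ∀ {m n : ℕ}, p ∣ m * n + 1 → (m : ZMod p) * n = -1 := fun h =>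
    eq_neg_of_add_eq_zero_left (by exact_mod_cast (ZMod.natCast_eq_zero_iff _ p).mpr h)
  refine ZMod.exists_sq_eq_neg_one_iff.mp ⟨x * y * z, ?_⟩ hp4
  push_cast
  linear_combination (-(x * z : ZMod p) * (y * z)) * mul_eq_neg_one hxy +
    (y * z : ZMod p) * mul_eq_neg_one hxz - mul_eq_neg_one hyz

theorem Nat.eq_of_eq_pow_mul_of_not_dvd {p s α m : ℕ} (h : s = p ^ α * m) (hs : ¬ p ∣ s) :
    s = m := by
  obtain rfl : α = 0 := by
    by_contra hα
    exact hs (h ▸ dvd_mul_of_dvd_left (dvd_pow_self p hα) m)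
  simpa using h

theorem Nat.Prime.false_of_star {p q v x y z α β α' β' : ℕ} (hp : p.Prime) (hp4 : p % 4 = 3)
    (hx : 0 < x) (hxy : x < y) (hyz : y < z)
    (hvx : p ∣ v * x + 1) (hvy : p ∣ v * y + 1) (hvz : p ∣ v * z + 1)
    (hsxz : x * z + 1 = p ^ α * q ^ β) (hsyz : y * z + 1 = p ^ α' * q ^ β') : False :=
  Nat.false_of_mul_add_one_eq_pow hx hxy hyz.le
    (Nat.eq_of_eq_pow_mul_of_not_dvd hsxz
      (hp.not_dvd_mul_add_one_of_mod_four_eq_three hp4 hvx hvz))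
    (Nat.eq_of_eq_pow_mul_of_not_dvd hsyz
      (hp.not_dvd_mul_add_one_of_mod_four_eq_three hp4 hvy hvz))

theorem stmt_6_general (p q : ℕ) (hp : p.Prime)
    (hp4 : p % 4 = 3)
    (a b c d : ℕ) (ha : 0 < a) (hab : a < b) (hbc : b < c) (hcd : c < d)
    (α1 α2 α3 α4 α5 α6 β1 β2 β3 β4 β5 β6 : ℕ)
    (h1 : a * b + 1 = p ^ α1 * q ^ β1)
    (h2 : a * c + 1 = p ^ α2 * q ^ β2)
    (h3 : a * d + 1 = p ^ α3 * q ^ β3)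
    (h4 : b * c + 1 = p ^ α4 * q ^ β4)
    (h5 : b * d + 1 = p ^ α5 * q ^ β5)
    (h6 : c * d + 1 = p ^ α6 * q ^ β6) :
    (α1 = 0 ∧ α6 = 0) ∨ (α2 = 0 ∧ α5 = 0) ∨ (α3 = 0 ∧ α4 = 0) := by
  by_contra H
  simp only [not_or] at H
  obtain ⟨H16, H25, H34⟩ := H
  have marked : ∀ {s t α α' β β'}, s = p ^ α * q ^ β → t = p ^ α' * q ^ β' →
      ¬(α = 0 ∧ α' = 0) → p ∣ s ∨ p ∣ t := fun hs ht hαα' =>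
    (not_and_or.mp hαα').imp (fun hα => hs ▸ dvd_mul_of_dvd_left (dvd_pow_self p hα) _)
      (fun hα' => ht ▸ dvd_mul_of_dvd_left (dvd_pow_self p hα') _)
  rcases marked h1 h6 H16 with p1 | p6 <;> rcases marked h2 h5 H25 with p2 | p5 <;>
    rcases marked h3 h4 H34 with p3 | p4
  · exact hp.false_of_star hp4 (ha.trans hab) hbc hcd p1 p2 p3 h5 h6
  · exact hp.not_dvd_mul_add_one_of_mod_four_eq_three hp4 p1 p2 p4
  · exact hp.not_dvd_mul_add_one_of_mod_four_eq_three hp4 p1 p3 p5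
  · exact hp.false_of_star hp4 ha (hab.trans hbc) hcd (by rwa [mul_comm]) p4 p5 h3 h6
  · exact hp.not_dvd_mul_add_one_of_mod_four_eq_three hp4 p2 p3 p6
  · exact hp.false_of_star hp4 ha hab (hbc.trans hcd) (by rwa [mul_comm]) (by rwa [mul_comm])
      p6 h3 h5
  · exact hp.false_of_star hp4 ha hab hbc (by rwa [mul_comm]) (by rwa [mul_comm])
      (by rwa [mul_comm]) h2 h4
  · exact hp.not_dvd_mul_add_one_of_mod_four_eq_three hp4 p4 p5 p6

theorem stmt_6 (p q : ℕ) (hp : p.Prime) (hq : q.Prime) (hpq : p ≠ q)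
    (hp4 : p % 4 = 3)
    (a b c d : ℕ) (ha : 0 < a) (hab : a < b) (hbc : b < c) (hcd : c < d)
    (α1 α2 α3 α4 α5 α6 β1 β2 β3 β4 β5 β6 : ℕ)
    (h1 : a * b + 1 = p ^ α1 * q ^ β1)
    (h2 : a * c + 1 = p ^ α2 * q ^ β2)
    (h3 : a * d + 1 = p ^ α3 * q ^ β3)
    (h4 : b * c + 1 = p ^ α4 * q ^ β4)
    (h5 : b * d + 1 = p ^ α5 * q ^ β5)
    (h6 : c * d + 1 = p ^ α6 * q ^ β6) :
    (α1 = 0 ∧ α6 = 0) ∨ (α2 = 0 ∧ α5 = 0) ∨ (α3 = 0 ∧ α4 = 0) :=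
  stmt_6_general p q hp hp4 a b c d ha hab hbc hcd α1 α2 α3 α4 α5 α6 β1 β2 β3 β4 β5 β6 h1 h2 h3 h4
    h5 h6
end

section
/- Let a < b < c < d be positive integers. Then the quantity T = (ab+1)(cd+1) / ((ad+1)(bc+1)) satisfies 1 < T < 1 + 1/(ab). -/
/-! Since `(ab+1)(cd+1) - (ad+1)(bc+1) = (d-b)(c-a)`, the quotient exceeds `1` by
`(d-b)(c-a) / ((ad+1)(bc+1))`, which is positive. It is less than `1/(ab)` because
`a(d-b) < ad+1` and `b(c-a) < bc+1`. -/

theorem mul_add_one_mul_div_mul_add_one_eq {K : Type*} [Field K] {a b c d : K}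
    (h : (a * d + 1) * (b * c + 1) ≠ 0) :
    (a * b + 1) * (c * d + 1) / ((a * d + 1) * (b * c + 1)) =
      1 + (d - b) * (c - a) / ((a * d + 1) * (b * c + 1)) := by
  rw [one_add_div h]
  congr 1
  ring

section

variable {K : Type*} [Field K] [LinearOrder K] [IsStrictOrderedRing K] {a b c d : K}

theorem mul_add_one_mul_pos (ha : 0 < a) (hb : 0 < b) (hac : a ≤ c) (hbd : b ≤ d) :
    0 < (a * d + 1) * (b * c + 1) := by
  have hc : 0 < c := ha.trans_le hac
  have hd : 0 < d := hb.trans_le hbd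
  positivity

theorem one_lt_mul_add_one_mul_div (ha : 0 < a) (hb : 0 < b) (hac : a < c) (hbd : b < d) :
    1 < (a * b + 1) * (c * d + 1) / ((a * d + 1) * (b * c + 1)) := by
  have hD := mul_add_one_mul_pos ha hb hac.le hbd.le
  rw [mul_add_one_mul_div_mul_add_one_eq hD.ne', lt_add_iff_pos_right]
  exact div_pos (mul_pos (sub_pos.2 hbd) (sub_pos.2 hac)) hD

theorem mul_add_one_mul_div_lt (ha : 0 < a) (hb : 0 < b) (hac : a ≤ c) (hbd : b ≤ d) :
    (a * b + 1) * (c * d + 1) / ((a * d + 1) * (b * c + 1)) < 1 + 1 / (a * b) := by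
  have hD := mul_add_one_mul_pos ha hb hac hbd
  have hab : 0 < a * b := mul_pos ha hb
  rw [mul_add_one_mul_div_mul_add_one_eq hD.ne', add_lt_add_iff_left, div_lt_div_iff₀ hD hab,
    one_mul]
  have hleft : a * (d - b) < a * d + 1 := by linarith [mul_sub a d b]
  have hright : b * (c - a) < b * c + 1 := by linarith [mul_sub b c a, mul_comm a b]
  calc (d - b) * (c - a) * (a * b) = (a * (d - b)) * (b * (c - a)) := by ring
    _ < (a * d + 1) * (b * c + 1) :=
      mul_lt_mul'' hleft hright (mul_nonneg ha.le (sub_nonneg.2 hbd))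
        (mul_nonneg hb.le (sub_nonneg.2 hac))

end

theorem stmt_11 (a b c d : ℕ) (ha : 0 < a) (hab : a < b) (hbc : b < c) (hcd : c < d) :
    1 < ((a * b + 1) * (c * d + 1) : ℚ) / ((a * d + 1) * (b * c + 1)) ∧
    ((a * b + 1) * (c * d + 1) : ℚ) / ((a * d + 1) * (b * c + 1)) < 1 + 1 / (a * b) := by
  have ha' : (0 : ℚ) < a := by exact_mod_cast ha
  have hb' : (0 : ℚ) < b := by exact_mod_cast ha.trans hab
  have hac : (a : ℚ) < c := by exact_mod_cast hab.trans hbc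
  have hbd : (b : ℚ) < d := by exact_mod_cast hbc.trans hcd
  exact ⟨one_lt_mul_add_one_mul_div ha' hb' hac hbd,
    mul_add_one_mul_div_lt ha' hb' hac.le hbd.le⟩
end

section
/- Let a < b < c < d be positive integers. Then T' = (ac+1)(bd+1) / ((ad+1)(bc+1)) satisfies 1 < T' < 1 + 1/(ac). -/
/-!
The numerator exceeds the denominator by exactly `(d - c) * (b - a)`, so
`T' = 1 + (d - c) * (b - a) / ((a * d + 1) * (b * c + 1))`. The excess is positive, and it is
less than `d * b`; multiplied by `a * c` it stays below `(a * d) * (b * c)`, hence below the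
denominator, which is the upper bound.
-/

theorem mul_add_one_div_mul_add_one_eq_one_add {K : Type*} [Field K] (a b c d : K)
    (h : (a * d + 1) * (b * c + 1) ≠ 0) :
    (a * c + 1) * (b * d + 1) / ((a * d + 1) * (b * c + 1)) =
      1 + (d - c) * (b - a) / ((a * d + 1) * (b * c + 1)) := by
  rw [one_add_div h]
  congr 1
  ring

section Bounds

variable {K : Type*} [Field K] [LinearOrder K] [IsStrictOrderedRing K] {a b c d : K}

theorem one_lt_mul_add_one_div_mul_add_one (ha : 0 < a) (hab : a < b) (hc : 0 < c)
    (hcd : c < d) :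
    1 < (a * c + 1) * (b * d + 1) / ((a * d + 1) * (b * c + 1)) := by
  have hden : 0 < (a * d + 1) * (b * c + 1) := by
    have := ha.trans hab; have := hc.trans hcd; positivity
  rw [mul_add_one_div_mul_add_one_eq_one_add a b c d hden.ne']
  exact lt_add_of_pos_right 1 (div_pos (mul_pos (sub_pos.2 hcd) (sub_pos.2 hab)) hden)

theorem mul_add_one_div_mul_add_one_lt_one_add_one_div (ha : 0 < a) (hab : a < b) (hc : 0 < c)
    (hcd : c < d) :
    (a * c + 1) * (b * d + 1) / ((a * d + 1) * (b * c + 1)) < 1 + 1 / (a * c) := by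
  have hb := ha.trans hab
  have hd := hc.trans hcd
  have hden : 0 < (a * d + 1) * (b * c + 1) := by positivity
  have hexcess : (d - c) * (b - a) < d * b :=
    mul_lt_mul'' (sub_lt_self d hc) (sub_lt_self b ha) (sub_pos.2 hcd).le (sub_pos.2 hab).le
  rw [mul_add_one_div_mul_add_one_eq_one_add a b c d hden.ne', add_lt_add_iff_left,
    div_lt_div_iff₀ hden (by positivity)]
  calc (d - c) * (b - a) * (a * c) < d * b * (a * c) := by gcongr
    _ < 1 * ((a * d + 1) * (b * c + 1)) := by nlinarith [mul_pos ha hd, mul_pos hb hc]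

end Bounds

theorem stmt_12 (a b c d : ℕ) (ha : 0 < a) (hab : a < b) (hbc : b < c) (hcd : c < d) :
    1 < ((a * c + 1) * (b * d + 1) : ℚ) / ((a * d + 1) * (b * c + 1)) ∧
    ((a * c + 1) * (b * d + 1) : ℚ) / ((a * d + 1) * (b * c + 1)) < 1 + 1 / (a * c) := by
  have ha' : (0 : ℚ) < a := by exact_mod_cast ha
  have hab' : (a : ℚ) < b := by exact_mod_cast hab
  have hc' : (0 : ℚ) < c := by exact_mod_cast ha.trans (hab.trans hbc)
  have hcd' : (c : ℚ) < d := by exact_mod_cast hcd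
  exact ⟨one_lt_mul_add_one_div_mul_add_one ha' hab' hc' hcd',
    mul_add_one_div_mul_add_one_lt_one_add_one_div ha' hab' hc' hcd'⟩
end

section
/- Let p < q be odd primes and a < b < c < d positive integers forming a {p,q}-Diophantine quadruple. Then it is impossible that simultaneously ab+1 = q^{β1}, ac+1 = p^{α2}, ad+1 = p^{α3} q^{β3}, bc+1 = p^{α4} q^{β4}, bd+1 = p^{α5}, cd+1 = q^{β6} for nonnegative integers α2, α3, α4, α5, β1, β3, β4, β6. -/
/-!
Comparing `y (xz + 1) = x (yz + 1) + (y - x)` at a prime whose power is `yz + 1` shows that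
`y - x` and `xz + 1` have the same valuation there. Applied to the quadruple this gives
`v_p(b - a) = α3`, `v_q(c - a) = β3`, `v_q(d - b) = β4`, and then `α4 = α3`, `β3 < β4` and
`β3 = β1`. Writing `K = p^α3` and `β4 = β1 + M`, the number `q^M` divides `K - 1`, so
`K > q^M + 1` by parity. The identity
`(ac+1)(bd+1) + (ad+1) + (bc+1) = (ad+1)(bc+1) + (ac+1) + (bd+1)` then forces
`p^α2 ∣ K (q^M + 1)`, which is compatible with the sizes of `ab + 1`, `ac + 1`, `bc + 1` only
for `a = 1`. Finally, modulo `b = q^β1 - 1` the equation `bc + 1 = K q^(β1 + M)` together with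
`K ∣ b - 1` makes `b` divide `q^(M % β1) + (b - 1)/K`, a positive number smaller than `b`.
-/

section Valuation

variable {p : ℕ} [hp : Fact p.Prime]

lemma padicValNat_lt_of_lt_pow {n k : ℕ} (hn : n ≠ 0) (h : n < p ^ k) : padicValNat p n < k :=
  (pow_lt_pow_iff_right₀ hp.out.one_lt).mp
    ((Nat.le_of_dvd (Nat.pos_of_ne_zero hn) pow_padicValNat_dvd).trans_lt h)

lemma padicValNat_add_of_lt {x y : ℕ} (hx : x ≠ 0) (h : padicValNat p x < padicValNat p y) :
    padicValNat p (x + y) = padicValNat p x := by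
  have hy : y ≠ 0 := by rintro rfl; simp at h
  have hxy : x + y ≠ 0 := by omega
  apply le_antisymm
  · by_contra! hlt
    have hsum : p ^ (padicValNat p x + 1) ∣ x + y := (padicValNat_dvd_iff_le hxy).mpr hlt
    have hy' : p ^ (padicValNat p x + 1) ∣ y := (padicValNat_dvd_iff_le hy).mpr h
    exact pow_succ_padicValNat_not_dvd hx ((Nat.dvd_add_left hy').mp hsum)
  · exact (padicValNat_dvd_iff_le hxy).mp
      (dvd_add pow_padicValNat_dvd ((pow_dvd_pow p h.le).trans pow_padicValNat_dvd))

lemma padicValNat_add_eq_min {x y : ℕ} (hx : x ≠ 0) (hy : y ≠ 0)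
    (h : padicValNat p x ≠ padicValNat p y) :
    padicValNat p (x + y) = min (padicValNat p x) (padicValNat p y) := by
  rcases h.lt_or_gt with hlt | hlt
  · rw [padicValNat_add_of_lt hx hlt, min_eq_left hlt.le]
  · rw [add_comm, padicValNat_add_of_lt hy hlt, min_eq_right hlt.le]

lemma padicValNat_mul_of_not_dvd {m n : ℕ} (hm : ¬ p ∣ m) (hn : n ≠ 0) :
    padicValNat p (m * n) = padicValNat p n := by
  rw [padicValNat.mul (by rintro rfl; exact hm (dvd_zero p)) hn, padicValNat.eq_zero_of_not_dvd hm,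
    zero_add]

lemma not_dvd_of_add_one_eq_pow {n k : ℕ} (hn : 0 < n) (h : n + 1 = p ^ k) : ¬ p ∣ n := by
  intro hdvd
  have hk : k ≠ 0 := by rintro rfl; rw [pow_zero] at h; omega
  exact hp.out.one_lt.ne' (Nat.dvd_one.mp ((Nat.dvd_add_right hdvd).mp (h ▸ dvd_pow_self p hk)))

lemma padicValNat_sub_eq_of_mul_add_one_eq_pow {x y z k : ℕ} (hxy : x < y) (hz : 0 < z)
    (h : y * z + 1 = p ^ k) : padicValNat p (y - x) = padicValNat p (x * z + 1) := by
  have hy : ¬ p ∣ y := fun hpy =>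
    not_dvd_of_add_one_eq_pow (Nat.mul_pos (by omega) hz) h (hpy.mul_right z)
  rcases Nat.eq_zero_or_pos x with rfl | hx
  · simp [padicValNat.eq_zero_of_not_dvd hy]
  have key : y * (x * z + 1) = (y - x) + x * p ^ k := by rw [← h]; zify [hxy.le]; ring
  have hlt : padicValNat p (y - x) < padicValNat p (x * p ^ k) := by
    rw [padicValNat.mul hx.ne' (pow_ne_zero k hp.out.ne_zero), padicValNat.prime_pow]
    refine (padicValNat_lt_of_lt_pow (by omega) ?_).trans_le (Nat.le_add_left _ _)
    nlinarith
  rw [← padicValNat_add_of_lt (by omega) hlt, ← key, padicValNat_mul_of_not_dvd hy (by omega)]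

lemma padicValNat_mul_add_one_eq_of_mul_add_one_eq_pow {x y z k : ℕ} (hx : 0 < x) (hxy : x < y)
    (hyz : y ≤ z) (h : x * z + 1 = p ^ k) :
    padicValNat p (y * z + 1) = padicValNat p (y - x) := by
  have hz : ¬ p ∣ z := fun hpz =>
    not_dvd_of_add_one_eq_pow (Nat.mul_pos hx (by omega)) h (hpz.mul_left x)
  have hlt : padicValNat p (z * (y - x)) < padicValNat p (x * z + 1) := by
    rw [padicValNat_mul_of_not_dvd hz (by omega), h, padicValNat.prime_pow]
    exact padicValNat_lt_of_lt_pow (by omega) (by rw [← h]; nlinarith [Nat.sub_le y x])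
  have key : y * z + 1 = z * (y - x) + (x * z + 1) := by zify [hxy.le]; ring
  rw [key, padicValNat_add_of_lt (Nat.mul_ne_zero (by omega) (by omega)) hlt,
    padicValNat_mul_of_not_dvd hz (by omega)]

lemma padicValNat_sub_eq_of_lt_padicValNat_sub {a b c d k l : ℕ} (ha : 0 < a) (hab : a < b)
    (hbc : b < c) (hcd : c < d) (h1 : a * b + 1 = p ^ k) (h6 : c * d + 1 = p ^ l)
    (hlt : padicValNat p (c - a) < padicValNat p (d - b)) : padicValNat p (c - a) = k := by
  have hb : ¬ p ∣ b := fun h =>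
    not_dvd_of_add_one_eq_pow (Nat.mul_pos ha (by omega)) h1 (h.mul_left a)
  have hc : ¬ p ∣ c := fun h =>
    not_dvd_of_add_one_eq_pow (Nat.mul_pos (by omega) (by omega)) h6 (h.mul_right d)
  have hsum : padicValNat p (b * (c - a) + c * (d - b)) = padicValNat p (c - a) := by
    rw [padicValNat_add_of_lt, padicValNat_mul_of_not_dvd hb (by omega)]
    · exact Nat.mul_ne_zero (by omega) (by omega)
    · rwa [padicValNat_mul_of_not_dvd hb (by omega), padicValNat_mul_of_not_dvd hc (by omega)]
  have key : c * d + 1 = (a * b + 1) + (b * (c - a) + c * (d - b)) := by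
    zify [hab.le, hbc.le, (hab.trans hbc).le, (hbc.trans hcd).le]; ring
  have hkl : k < l := (pow_lt_pow_iff_right₀ hp.out.one_lt).mp (by rw [← h1, ← h6]; nlinarith)
  by_contra hne
  have hval := padicValNat_add_eq_min (p := p) (x := a * b + 1) (y := b * (c - a) + c * (d - b))
    (by omega) (Nat.add_pos_left (Nat.mul_pos (by omega) (by omega)) _).ne'
    (by rw [hsum, h1, padicValNat.prime_pow]; exact Ne.symm hne)
  rw [← key, h6, h1, padicValNat.prime_pow, padicValNat.prime_pow, hsum] at hval
  omega

end Valuation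

lemma padicValNat_sub_lt_of_pow_dvd_sub {p q a b c i j : ℕ} (hq : 1 < q) (hab : a < b)
    (hac : a < c) (hi : p ^ i ∣ b - a) (h : b * c + 1 = p ^ i * q ^ j) :
    padicValNat q (c - a) < j := by
  refine (pow_lt_pow_iff_right₀ hq).mp (Nat.lt_of_mul_lt_mul_left (a := p ^ i) ?_)
  calc p ^ i * q ^ padicValNat q (c - a)
      ≤ (b - a) * (c - a) :=
        Nat.mul_le_mul (Nat.le_of_dvd (by omega) hi) (Nat.le_of_dvd (by omega) pow_padicValNat_dvd)
    _ < b * c + 1 := Nat.lt_succ_of_le (Nat.mul_le_mul (Nat.sub_le b a) (Nat.sub_le c a))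
    _ = p ^ i * q ^ j := h

lemma add_one_lt_of_dvd_sub_one {x y : ℕ} (hx : Odd x) (hy : Odd y) (hx1 : 1 < x)
    (h : y ∣ x - 1) : y + 1 < x := by
  obtain ⟨t, ht⟩ := h
  have ht0 : t ≠ 0 := by rintro rfl; omega
  have ht1 : t ≠ 1 := by
    rintro rfl
    obtain ⟨m, rfl⟩ := hx
    obtain ⟨n, rfl⟩ := hy
    omega
  have := Nat.mul_le_mul_left y (show 2 ≤ t by omega)
  omega

lemma dvd_sub_one_of_mul_add_one_eq {a b d n Q K : ℕ} (hQ : 0 < Q)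
    (h1 : a * b + 1 = Q) (h3 : a * d + 1 = K * Q) (h : Q * n ∣ d - b) : n ∣ K - 1 := by
  have key : a * (d - b) = Q * (K - 1) := by
    rw [Nat.mul_sub, Nat.mul_sub_one, mul_comm Q K]
    omega
  exact Nat.dvd_of_mul_dvd_mul_left hQ (key ▸ h.mul_left a)

lemma add_one_lt_pow_of_pow_dvd_sub {p q a b d α β M : ℕ} (hp : Odd p) (hq : Odd q) (ha : 0 < a)
    (hbd : b < d) (h1 : a * b + 1 = q ^ β) (h3 : a * d + 1 = p ^ α * q ^ β)
    (h : q ^ (β + M) ∣ d - b) : q ^ M + 1 < p ^ α := by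
  have hα : 1 < p ^ α :=
    Nat.lt_of_mul_lt_mul_right (a := q ^ β) (by rw [one_mul, ← h3, ← h1]; nlinarith)
  exact add_one_lt_of_dvd_sub_one hp.pow hq.pow hα
    (dvd_sub_one_of_mul_add_one_eq (pow_pos hq.pos _) h1 h3 (pow_add q β M ▸ h))

lemma dvd_add_of_dvd_mul {a b c d n : ℕ} (hac : n ∣ a * c + 1) (hbd : n ∣ b * d + 1)
    (h : n ∣ (a * d + 1) * (b * c + 1)) : n ∣ (a * d + 1) + (b * c + 1) := by
  have key : (a * c + 1) * (b * d + 1) + ((a * d + 1) + (b * c + 1))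
      = (a * d + 1) * (b * c + 1) + (a * c + 1) + (b * d + 1) := by ring
  exact (Nat.dvd_add_right (hac.mul_right _)).mp (key ▸ (h.add hac).add hbd)

lemma pow_dvd_mul_pow_add_one {p q a b c d α2 α5 α β M : ℕ} (hp : p.Prime) (hq : q.Prime)
    (hpq : p ≠ q) (h25 : α2 ≤ α5) (hM : q ^ M + 1 < p ^ α)
    (h2 : a * c + 1 = p ^ α2) (h5 : b * d + 1 = p ^ α5) (h3 : a * d + 1 = p ^ α * q ^ β)
    (h4 : b * c + 1 = p ^ α * q ^ (β + M)) : p ^ α2 ∣ p ^ α * (q ^ M + 1) := by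
  have hsum : p ^ min α2 (2 * α) ∣ q ^ β * (p ^ α * (q ^ M + 1)) := by
    have := dvd_add_of_dvd_mul (n := p ^ min α2 (2 * α))
      (h2 ▸ pow_dvd_pow p (min_le_left _ _))
      (h5 ▸ pow_dvd_pow p ((min_le_left _ _).trans h25))
      ((pow_dvd_pow p (min_le_right _ _)).trans
        ⟨q ^ β * q ^ (β + M), by rw [h3, h4, two_mul, pow_add]; ring⟩)
    rwa [h3, h4, show p ^ α * q ^ β + p ^ α * q ^ (β + M) = q ^ β * (p ^ α * (q ^ M + 1)) by
      ring] at this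
  have hmin := (Nat.Coprime.pow _ _ ((Nat.coprime_primes hp hq).mpr hpq)).dvd_of_dvd_mul_left hsum
  rcases min_cases α2 (2 * α) with ⟨hm, -⟩ | ⟨hm, -⟩
  · rwa [hm] at hmin
  · rw [hm, two_mul, pow_add] at hmin
    have := Nat.le_of_dvd (by omega) (Nat.dvd_of_mul_dvd_mul_left (pow_pos hp.pos α) hmin)
    omega

lemma le_one_of_mul_add_one_le {a b c : ℕ} (hab : a < b) (hbc : b < c)
    (h : (a * c + 1) * (a * b + 1) ≤ b * c + 1 + (b - a) * (a * b + 1)) : a ≤ 1 := by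
  by_contra! ha
  have hba : (b - a) * (a * b + 1) ≤ b * (a * b + 1) := Nat.mul_le_mul_right _ (Nat.sub_le b a)
  have h2 : 2 * (b * c) ≤ a * (b * c) := Nat.mul_le_mul_right _ ha
  have h3 : a * b * (b + 1) ≤ a * b * c := Nat.mul_le_mul_left _ hbc
  nlinarith

lemma le_one_of_pow_dvd_mul_pow_add_one {p q a b c α2 α β M : ℕ} (hab : a < b)
    (hbc : b < c) (hBA : p ^ α ∣ b - a) (h1 : a * b + 1 = q ^ β) (h2 : a * c + 1 = p ^ α2)
    (h4 : b * c + 1 = p ^ α * q ^ (β + M)) (h : p ^ α2 ∣ p ^ α * (q ^ M + 1)) : a ≤ 1 :=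
  le_one_of_mul_add_one_le hab hbc <| calc
    (a * c + 1) * (a * b + 1) = p ^ α2 * q ^ β := by rw [h2, h1]
    _ ≤ p ^ α * (q ^ M + 1) * q ^ β := Nat.mul_le_mul_right _ <|
      Nat.le_of_dvd (Nat.mul_pos (Nat.pos_of_dvd_of_pos hBA (by omega)) (by omega)) h
    _ = b * c + 1 + p ^ α * (a * b + 1) := by rw [h4, h1]; ring
    _ ≤ b * c + 1 + (b - a) * (a * b + 1) := by gcongr; exact Nat.le_of_dvd (by omega) hBA

lemma mul_add_one_ne_mul_pow {q K b c β M : ℕ} (hq : 3 ≤ q) (hK : 2 ≤ K)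
    (hb : b + 1 = q ^ β) (hKb : K ∣ b - 1) : b * c + 1 ≠ K * q ^ (β + M) := by
  intro h
  have hβ : β ≠ 0 := by
    rintro rfl
    rw [pow_zero, Nat.add_eq_right] at hb
    rw [hb, zero_mul, zero_add, zero_add] at h
    have : 1 ≤ q ^ M := Nat.one_le_pow _ _ (by omega)
    nlinarith
  have hb2 : 2 ≤ b := by have := Nat.le_self_pow hβ q; omega
  obtain ⟨G, hG⟩ := hKb
  have hQ : (q : ZMod b) ^ β = 1 := by
    have := congrArg (Nat.cast : ℕ → ZMod b) hb
    push_cast [ZMod.natCast_self, zero_add] at this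
    exact this.symm
  have hKY : (K : ZMod b) * q ^ (M % β) = 1 := by
    have := congrArg (Nat.cast : ℕ → ZMod b) h
    push_cast [ZMod.natCast_self] at this
    rwa [zero_mul, zero_add, pow_add, hQ, one_mul, ← Nat.div_add_mod M β, pow_add, pow_mul, hQ,
      one_pow, one_mul, eq_comm] at this
  have hKG : (K : ZMod b) * G = -1 := by
    have := congrArg (Nat.cast : ℕ → ZMod b) (show b = K * G + 1 by omega)
    push_cast [ZMod.natCast_self] at this
    linear_combination -this
  have hdvd : b ∣ q ^ (M % β) + G := by
    rw [← ZMod.natCast_eq_zero_iff]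
    push_cast
    linear_combination (-(G : ZMod b)) * hKY + ((q : ZMod b) ^ (M % β)) * hKG
  have hY : q ^ (M % β) * q ≤ b + 1 := by
    rw [hb, ← pow_succ]
    exact Nat.pow_le_pow_right (by omega) (Nat.mod_lt M (Nat.pos_of_ne_zero hβ))
  have hY3 := Nat.mul_le_mul_left (q ^ (M % β)) hq
  have hG2 := Nat.mul_le_mul_right G hK
  have := Nat.le_of_dvd (Nat.add_pos_left (pow_pos (by omega) _) _) hdvd
  omega

theorem stmt_15 (p q : ℕ) (hp : p.Prime) (hq : q.Prime) (hpq : p < q)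
    (hpo : Odd p) (hqo : Odd q)
    (a b c d : ℕ) (ha : 0 < a) (hab : a < b) (hbc : b < c) (hcd : c < d)
    (α2 α3 α4 α5 β1 β3 β4 β6 : ℕ)
    (h1 : a * b + 1 = q ^ β1)
    (h2 : a * c + 1 = p ^ α2)
    (h3 : a * d + 1 = p ^ α3 * q ^ β3)
    (h4 : b * c + 1 = p ^ α4 * q ^ β4)
    (h5 : b * d + 1 = p ^ α5)
    (h6 : c * d + 1 = q ^ β6) : False := by
  have := Fact.mk hp
  have := Fact.mk hq
  have hvBA : padicValNat p (b - a) = α3 := by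
    rw [padicValNat_sub_eq_of_mul_add_one_eq_pow hab (by omega) h5, h3,
      padicValNat_mul_pow_left _ _ hpq.ne]
  have hvCA : padicValNat q (c - a) = β3 := by
    rw [padicValNat_sub_eq_of_mul_add_one_eq_pow (hab.trans hbc) (by omega) h6, h3,
      padicValNat_mul_pow_right _ _ hpq.ne']
  have hvDB : padicValNat q (d - b) = β4 := by
    rw [padicValNat_sub_eq_of_mul_add_one_eq_pow (z := c) (hbc.trans hcd) (by omega)
      (by rw [mul_comm, h6]), h4, padicValNat_mul_pow_right _ _ hpq.ne']
  have hα4 : α4 = α3 := by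
    have := padicValNat_mul_add_one_eq_of_mul_add_one_eq_pow (p := p) ha hab hbc.le h2
    rwa [h4, padicValNat_mul_pow_left _ _ hpq.ne, hvBA] at this
  subst α4
  have hBA : p ^ α3 ∣ b - a := hvBA ▸ pow_padicValNat_dvd
  have hβ34 : β3 < β4 :=
    hvCA ▸ padicValNat_sub_lt_of_pow_dvd_sub hq.one_lt hab (hab.trans hbc) hBA h4
  have hβ1 : β1 = β3 := by
    rw [← hvCA, padicValNat_sub_eq_of_lt_padicValNat_sub ha hab hbc hcd h1 h6 (by rwa [hvCA, hvDB])]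
  subst hβ1
  obtain ⟨M, rfl⟩ := Nat.exists_eq_add_of_le hβ34.le
  have hK : q ^ M + 1 < p ^ α3 :=
    add_one_lt_pow_of_pow_dvd_sub hpo hqo ha (hbc.trans hcd) h1 h3 (hvDB ▸ pow_padicValNat_dvd)
  have h25 : α2 ≤ α5 := (pow_le_pow_iff_right₀ hp.one_lt).mp (by rw [← h2, ← h5]; nlinarith)
  have ha1 : a ≤ 1 := le_one_of_pow_dvd_mul_pow_add_one hab hbc hBA h1 h2 h4
    (pow_dvd_mul_pow_add_one hp hq hpq.ne h25 hK h2 h5 h3 h4)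
  obtain rfl : a = 1 := by omega
  exact mul_add_one_ne_mul_pow (by have := hp.two_le; omega) (by omega) (by rwa [one_mul] at h1)
    hBA h4
end
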